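/- Let ν > 2, β > 0, μ ∈ ℝ and λ > 0 be real numbers, let C(ν) = Γ((ν+1)/2)/(Γ(ν/2)·√(πν)), and let σ = √(ν/(ν−2))·λ (so that σ² is the variance of the nonstandardized t-distribution T_ν(μ, λ)). Let f(x) = (C(ν)/λ)·(1 + ((x−μ)/λ)²/ν)^{−(ν+1)/2} be the density of T_ν(μ, λ). Then ∫_{{x ∈ ℝ : |x−μ| < βσ}} f(x) dx ≥ 1 − 2·(ν/(ν−1))·(C(ν)/β)·(1 + β²/ν)^{−(ν−1)/2}. -/

import Mathlib

/-!
After the substitution `x = μ + λ√ν u` the mass of `T_ν(μ, λ)` within `βσ` of `μ`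
is `C √ν ∫_{|u| < a} (1 + u²)^(-p)` with `p = (ν + 1)/2` and `a = βσ/(λ√ν) ≥ c := β/√ν`.
The substitution `v = u²/(1 + u²)` turns `∫ (1 + u²)^(-p)` into the Beta integral
`B(1/2, p - 1/2)`, which makes `C √ν ∫ (1 + u²)^(-p) = 1`. Each tail beyond `c` is at most
`∫_c^∞ (u/c) (1 + u²)^(-p) du = (1 + c²)^(1-p) / (2c(p - 1))`.
-/

open MeasureTheory Real Set Filter Topology

theorem integrable_one_add_sq_rpow_neg {p : ℝ} (hp : 1 / 2 < p) :
    Integrable fun u : ℝ => (1 + u ^ 2) ^ (-p) := by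
  have := integrable_rpow_neg_one_add_norm_sq (E := ℝ) (μ := volume) (r := 2 * p)
    (by simp; linarith)
  simpa [Real.norm_eq_abs, sq_abs, neg_div] using this

theorem integral_Ioo_rpow_mul_one_sub_rpow {a b : ℝ} (ha : 0 < a) (hb : 0 < b) :
    ∫ v in Ioo (0 : ℝ) 1, v ^ (a - 1) * (1 - v) ^ (b - 1)
      = Gamma a * Gamma b / Gamma (a + b) := by
  change _ = ProbabilityTheory.beta a b
  rw [ProbabilityTheory.beta_eq_betaIntegralReal a b ha hb, Complex.betaIntegral,
    intervalIntegral.integral_of_le zero_le_one, ← integral_Ioc_eq_integral_Ioo,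
    ← RCLike.re_to_complex, ← integral_re]
  · refine setIntegral_congr_fun measurableSet_Ioc fun x ⟨hx0, hx1⟩ ↦ ?_
    norm_cast
    rw [← Complex.ofReal_cpow hx0.le, ← Complex.ofReal_cpow (by linarith), RCLike.re_to_complex,
      ← Complex.ofReal_mul, Complex.ofReal_re]
  · rw [← IntegrableOn, ← intervalIntegrable_iff_integrableOn_Ioc_of_le zero_le_one]
    exact Complex.betaIntegral_convergent (by simpa) (by simpa)

theorem image_sq_div_one_add_sq_Ioi :
    (fun u : ℝ => u ^ 2 / (1 + u ^ 2)) '' Ioi 0 = Ioo 0 1 := by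
  ext v
  constructor
  · rintro ⟨u, hu, rfl⟩
    have hu : 0 < u := hu
    exact ⟨by positivity, (div_lt_one (by positivity)).2 (by linarith)⟩
  · rintro ⟨hv0, hv1⟩
    refine ⟨√(v / (1 - v)), sqrt_pos.2 (div_pos hv0 (by linarith)), ?_⟩
    have h1v : 1 - v ≠ 0 := by linarith
    simp only
    rw [sq_sqrt (div_nonneg hv0.le (by linarith))]
    field_simp
    ring

theorem integral_Ioi_rpow_mul_one_add_sq_rpow {a b : ℝ} (ha : 0 < a) (hb : 0 < b) :
    ∫ u in Ioi (0 : ℝ), u ^ (2 * a - 1) * (1 + u ^ 2) ^ (-(a + b))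
      = Gamma a * Gamma b / Gamma (a + b) / 2 := by
  have hderiv : ∀ u ∈ Ioi (0 : ℝ), HasDerivWithinAt (fun u : ℝ => u ^ 2 / (1 + u ^ 2))
      (2 * u / (1 + u ^ 2) ^ 2) (Ioi 0) u := by
    intro u _
    have h := (hasDerivAt_pow 2 u).div ((hasDerivAt_pow 2 u).const_add 1)
      (by positivity : (1 + u ^ 2) ≠ 0)
    refine (h.congr_deriv ?_).hasDerivWithinAt
    field_simp
    ring
  have hmono : MonotoneOn (fun u : ℝ => u ^ 2 / (1 + u ^ 2)) (Ioi 0) := by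
    intro u (hu : 0 < u) w _ huw
    simp only
    rw [div_le_div_iff₀ (by positivity) (by positivity)]
    nlinarith [mul_le_mul huw huw hu.le (hu.le.trans huw)]
  rw [← integral_Ioo_rpow_mul_one_sub_rpow ha hb, ← image_sq_div_one_add_sq_Ioi,
    integral_image_eq_integral_deriv_smul_of_monotoneOn measurableSet_Ioi hderiv hmono,
    eq_div_iff two_ne_zero, ← integral_mul_const]
  refine setIntegral_congr_fun measurableSet_Ioi fun u (hu : 0 < u) ↦ ?_
  have hw : 0 < 1 + u ^ 2 := by positivity
  have h_compl : 1 - u ^ 2 / (1 + u ^ 2) = (1 + u ^ 2)⁻¹ := by field_simp; ring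
  have hu_sq : (u ^ 2) ^ (a - 1) = u ^ (2 * (a - 1)) := by
    rw [← rpow_natCast, ← rpow_mul hu.le]; norm_num
  have hu_pow : u ^ (2 * a - 1) = u ^ (2 * (a - 1)) * u := by
    rw [← rpow_add_one hu.ne']; ring_nf
  simp only [smul_eq_mul]
  rw [h_compl, div_rpow (sq_nonneg u) hw.le, inv_rpow hw.le, hu_sq, hu_pow]
  generalize 1 + u ^ 2 = w at hw ⊢
  have hw_pow : w ^ (-(a + b)) = (w ^ (a - 1) * w ^ (b - 1) * w ^ 2)⁻¹ := by
    rw [rpow_neg hw.le, ← rpow_add hw, ← rpow_natCast, ← rpow_add hw]; push_cast; ring_nf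
  rw [hw_pow]
  field_simp

theorem integral_one_add_sq_rpow_neg {p : ℝ} (hp : 1 / 2 < p) :
    ∫ u : ℝ, (1 + u ^ 2) ^ (-p) = √π * Gamma (p - 1 / 2) / Gamma p := by
  have h := integral_Ioi_rpow_mul_one_add_sq_rpow (a := 1 / 2) (b := p - 1 / 2) one_half_pos
    (by linarith)
  simp only [show 2 * (1 / 2 : ℝ) - 1 = 0 by norm_num, rpow_zero, one_mul, add_sub_cancel,
    Gamma_one_half_eq] at h
  have h_abs := integral_comp_abs (f := fun u : ℝ => (1 + u ^ 2) ^ (-p))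
  simp only [sq_abs] at h_abs
  rw [h_abs, h]
  ring

theorem intervalIntegral_neg_self_eq_integral_sub_two_mul_integral_Ioi {g : ℝ → ℝ}
    (hg : Integrable g) (heven : ∀ x, g (-x) = g x) (a : ℝ) :
    ∫ x in -a..a, g x = (∫ x, g x) - 2 * ∫ x in Ioi a, g x := by
  have h_left : ∫ x in Iic (-a), g x = ∫ x in Ioi a, g x := by
    simp only [← integral_comp_neg_Ioi, heven]
  rw [← intervalIntegral.integral_Iic_sub_Iic hg.integrableOn hg.integrableOn, h_left,
    ← intervalIntegral.integral_Iic_add_Ioi (b := a) hg.integrableOn hg.integrableOn]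
  ring

theorem hasDerivAt_one_add_sq_rpow (q x : ℝ) :
    HasDerivAt (fun x : ℝ => (1 + x ^ 2) ^ q) (2 * q * x * (1 + x ^ 2) ^ (q - 1)) x := by
  have h := ((hasDerivAt_pow 2 x).const_add 1).rpow_const (p := q) (Or.inl (by positivity))
  convert h using 1
  push_cast
  ring

theorem integrableOn_and_integral_Ioi_mul_one_add_sq_rpow_neg {p c : ℝ} (hp : 1 < p)
    (hc : 0 ≤ c) :
    IntegrableOn (fun x : ℝ => x * (1 + x ^ 2) ^ (-p)) (Ioi c) ∧
      ∫ x in Ioi c, x * (1 + x ^ 2) ^ (-p) = (1 + c ^ 2) ^ (-(p - 1)) / (2 * (p - 1)) := by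
  have hp1 : p - 1 ≠ 0 := by linarith
  have hderiv (x : ℝ) : HasDerivAt (fun x : ℝ => -(1 + x ^ 2) ^ (-(p - 1)) / (2 * (p - 1)))
      (x * (1 + x ^ 2) ^ (-p)) x := by
    refine ((hasDerivAt_one_add_sq_rpow (-(p - 1)) x).neg.div_const _).congr_deriv ?_
    rw [show -(p - 1) - 1 = -p by ring]
    field_simp
  have hnonneg : ∀ x ∈ Ioi c, 0 ≤ x * (1 + x ^ 2) ^ (-p) := fun x (hx : c < x) ↦
    mul_nonneg (hc.trans hx.le) (rpow_nonneg (by positivity) _)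
  have hlim : Tendsto (fun x : ℝ => -(1 + x ^ 2) ^ (-(p - 1)) / (2 * (p - 1))) atTop (𝓝 0) := by
    have h := (tendsto_rpow_neg_atTop (by linarith : 0 < p - 1)).comp
      (tendsto_atTop_add_const_left _ 1 (tendsto_pow_atTop two_ne_zero))
    simpa using h.neg.div_const (2 * (p - 1))
  refine ⟨integrableOn_Ioi_deriv_of_nonneg' (fun x _ ↦ hderiv x) hnonneg hlim, ?_⟩
  rw [integral_Ioi_of_hasDerivAt_of_nonneg' (fun x _ ↦ hderiv x) hnonneg hlim]
  ring

theorem integral_Ioi_one_add_sq_rpow_neg_le {p c : ℝ} (hp : 1 < p) (hc : 0 < c) :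
    ∫ x in Ioi c, (1 + x ^ 2) ^ (-p) ≤ (1 + c ^ 2) ^ (-(p - 1)) / (2 * c * (p - 1)) := by
  obtain ⟨h_int, h_eq⟩ := integrableOn_and_integral_Ioi_mul_one_add_sq_rpow_neg hp hc.le
  calc ∫ x in Ioi c, (1 + x ^ 2) ^ (-p)
      ≤ ∫ x in Ioi c, x * (1 + x ^ 2) ^ (-p) / c := by
        refine setIntegral_mono_on (integrable_one_add_sq_rpow_neg (by linarith)).integrableOn
          (h_int.div_const c) measurableSet_Ioi fun x (hx : c < x) ↦ ?_
        rw [le_div_iff₀ hc, mul_comm]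
        exact mul_le_mul_of_nonneg_right hx.le (rpow_nonneg (by positivity) _)
    _ = (1 + c ^ 2) ^ (-(p - 1)) / (2 * c * (p - 1)) := by
        rw [integral_div, h_eq]
        field_simp

theorem integral_one_add_sq_rpow_neg_sub_le_intervalIntegral {p a c : ℝ} (hp : 1 < p)
    (hc : 0 < c) (hca : c ≤ a) :
    (∫ u : ℝ, (1 + u ^ 2) ^ (-p)) - (1 + c ^ 2) ^ (-(p - 1)) / (c * (p - 1))
      ≤ ∫ u in -a..a, (1 + u ^ 2) ^ (-p) := by
  have h_int := integrable_one_add_sq_rpow_neg (by linarith : 1 / 2 < p)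
  have h_tail : ∫ u in Ioi a, (1 + u ^ 2) ^ (-p) ≤ ∫ u in Ioi c, (1 + u ^ 2) ^ (-p) :=
    setIntegral_mono_set h_int.integrableOn (.of_forall fun u ↦ rpow_nonneg (by positivity) _)
      (Ioi_subset_Ioi hca).eventuallyLE
  have h_bound := integral_Ioi_one_add_sq_rpow_neg_le hp hc
  rw [intervalIntegral_neg_self_eq_integral_sub_two_mul_integral_Ioi h_int
    (fun u ↦ by rw [neg_sq])]
  have h_two : 2 * ((1 + c ^ 2) ^ (-(p - 1)) / (2 * c * (p - 1)))
      = (1 + c ^ 2) ^ (-(p - 1)) / (c * (p - 1)) := by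
    field_simp
  linarith

theorem setIntegral_abs_sub_lt_comp_div_sub {g : ℝ → ℝ} {μ k r : ℝ} (hk : 0 < k)
    (hr : 0 ≤ r) :
    ∫ x in {x | |x - μ| < r}, g ((x - μ) / k) = k * ∫ u in -(r / k)..r / k, g u := by
  have hset : {x | |x - μ| < r} = Ioo (μ - r) (μ + r) := by
    ext x
    simp only [mem_ofPred_eq, mem_Ioo, abs_lt]
    constructor <;> rintro ⟨h1, h2⟩ <;> constructor <;> linarith
  rw [hset, ← integral_Ioc_eq_integral_Ioo, ← intervalIntegral.integral_of_le (by linarith),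
    intervalIntegral.integral_comp_sub_right (fun x ↦ g (x / k)),
    intervalIntegral.integral_comp_div g hk.ne', smul_eq_mul]
  ring_nf

theorem setIntegral_abs_sub_lt_studentT_density {ν l μ r C p : ℝ} (hν : 0 < ν) (hl : 0 < l)
    (hr : 0 ≤ r) :
    ∫ x in {x | |x - μ| < r}, C / l * (1 + ((x - μ) / l) ^ 2 / ν) ^ (-p)
      = C * √ν * ∫ u in -(r / (l * √ν))..r / (l * √ν), (1 + u ^ 2) ^ (-p) := by
  have hsν : 0 < √ν := sqrt_pos.2 hν
  have h_kernel (x : ℝ) :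
      (1 + ((x - μ) / l) ^ 2 / ν) = 1 + ((x - μ) / (l * √ν)) ^ 2 := by
    rw [div_mul_eq_div_div, div_pow (_ / l), sq_sqrt hν.le]
  simp_rw [h_kernel]
  rw [setIntegral_abs_sub_lt_comp_div_sub (g := fun u ↦ C / l * (1 + u ^ 2) ^ (-p))
    (mul_pos hl hsν) hr, intervalIntegral.integral_const_mul]
  field_simp

theorem nonstandardized_t_concentration
    (ν β μ l : ℝ) (hν : 2 < ν) (hβ : 0 < β) (hl : 0 < l)
    (C : ℝ) (hC : C = Real.Gamma ((ν + 1) / 2) / (Real.Gamma (ν / 2) * Real.sqrt (π * ν)))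
    (σ : ℝ) (hσ : σ = Real.sqrt (ν / (ν - 2)) * l)
    (f : ℝ → ℝ)
    (hf : f = fun x => C / l * (1 + ((x - μ) / l) ^ 2 / ν) ^ (-((ν + 1) / 2))) :
    1 - 2 * (ν / (ν - 1)) * (C / β) * (1 + β ^ 2 / ν) ^ (-((ν - 1) / 2))
      ≤ ∫ x in {x : ℝ | |x - μ| < β * σ}, f x := by
  have hsν : 0 < √ν := sqrt_pos.2 (by linarith)
  have hlσ : l ≤ σ :=
    hσ ▸ le_mul_of_one_le_left hl.le (one_le_sqrt.2 ((one_le_div (by linarith)).2 (by linarith)))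
  have hca : β / √ν ≤ β * σ / (l * √ν) := by
    rw [show β / √ν = β * l / (l * √ν) by field_simp]
    gcongr
  have hC0 : 0 ≤ C := hC ▸ div_nonneg (Gamma_pos_of_pos (by linarith)).le
    (mul_nonneg (Gamma_pos_of_pos (by linarith)).le (sqrt_nonneg _))
  have h_norm : C * √ν * ∫ u : ℝ, (1 + u ^ 2) ^ (-((ν + 1) / 2)) = 1 := by
    have hG := Gamma_pos_of_pos (show 0 < (ν + 1) / 2 by linarith)
    rw [integral_one_add_sq_rpow_neg (by linarith), hC, show (ν + 1) / 2 - 1 / 2 = ν / 2 by ring,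
      sqrt_mul pi_pos.le]
    field_simp
  have h_bound :
      C * √ν * ((1 + (β / √ν) ^ 2) ^ (-((ν + 1) / 2 - 1)) / (β / √ν * ((ν + 1) / 2 - 1)))
        = 2 * (ν / (ν - 1)) * (C / β) * (1 + β ^ 2 / ν) ^ (-((ν - 1) / 2)) := by
    have hν1 : ν - 1 ≠ 0 := by linarith
    rw [div_pow, sq_sqrt (by linarith), show (ν + 1) / 2 - 1 = (ν - 1) / 2 by ring]
    field_simp
    rw [sq_sqrt (by linarith)]
  have h_central := integral_one_add_sq_rpow_neg_sub_le_intervalIntegral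
    (p := (ν + 1) / 2) (by linarith) (by positivity) hca
  rw [hf, setIntegral_abs_sub_lt_studentT_density (by linarith) hl
    (mul_pos hβ (hl.trans_le hlσ)).le, ← h_bound]
  linarith [mul_le_mul_of_nonneg_left h_central (mul_nonneg hC0 hsν.le)]
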